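/- Let σ and σ' be rational polyhedral cones in N^ℝ that intersect in a common face (i.e. σ ∩ σ' is a face of σ and a face of σ'), and suppose both have the same smallest face V = σ ∩ (−σ) = σ' ∩ (−σ'), a linear subspace. Let π : N^ℝ → N^ℝ/V denote the quotient map. Then π(σ) ∩ π(σ') = π(σ ∩ σ'), and π(σ) ∩ π(σ') is a face of π(σ). -/

import Mathlib

open Set

/-- The coercion of an integral vector in `ℤ^n` to a real vector in `ℝ^n`. -/
def toR {n : ℕ} (v : Fin n → ℤ) : Fin n → ℝ := fun i => (v i : ℝ)

/-- The scalar extension `F^ℝ : N^ℝ → N'^ℝ` of a `ℤ`-linear map `F : N → N'`,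
where `N = ℤ^n`, `N' = ℤ^m`. -/
noncomputable def extR {n m : ℕ} (F : (Fin n → ℤ) →ₗ[ℤ] (Fin m → ℤ)) :
    (Fin n → ℝ) →ₗ[ℝ] (Fin m → ℝ) :=
  (Matrix.of fun i j => ((F (Pi.single j 1)) i : ℝ)).mulVecLin

/-- A convex cone: a subset containing `0` that is closed under addition and
under multiplication by nonnegative scalars. -/
def IsCone {V : Type*} [AddCommGroup V] [Module ℝ V] (σ : Set V) : Prop :=
  0 ∈ σ ∧ (∀ x ∈ σ, ∀ y ∈ σ, x + y ∈ σ) ∧ ∀ c : ℝ, 0 ≤ c → ∀ x ∈ σ, c • x ∈ σ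

/-- The convex-cone hull of a set: the smallest convex cone containing it. -/
def coneHull {V : Type*} [AddCommGroup V] [Module ℝ V] (s : Set V) : Set V :=
  ⋂₀ {σ | IsCone σ ∧ s ⊆ σ}

/-- A rational polyhedral cone in `ℝ^n`: a convex cone generated by finitely
many vectors of the lattice `ℤ^n`. -/
def IsRatCone {n : ℕ} (σ : Set (Fin n → ℝ)) : Prop :=
  ∃ s : Finset (Fin n → ℤ), σ = coneHull (toR '' ↑s)

/-- A cone is strictly convex if it contains no nonzero linear subspace,
equivalently `σ ∩ (-σ) = {0}`. -/
def IsStrictlyConvexCone {V : Type*} [AddCommGroup V] [Module ℝ V] (σ : Set V) : Prop :=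
  ∀ x ∈ σ, -x ∈ σ → x = 0

/-- `τ` is a face of the convex cone `σ`: a subcone such that whenever
`x, y ∈ σ` and `x + y ∈ τ`, then `x, y ∈ τ`. -/
def IsFaceOf {V : Type*} [AddCommGroup V] [Module ℝ V] (τ σ : Set V) : Prop :=
  IsCone τ ∧ τ ⊆ σ ∧ ∀ x ∈ σ, ∀ y ∈ σ, x + y ∈ τ → x ∈ τ ∧ y ∈ τ

/-- A system of `N`-cones: a finite set of rational polyhedral cones in `ℝ^n`. -/
def IsConeSystem {n : ℕ} (S : Set (Set (Fin n → ℝ))) : Prop :=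
  S.Finite ∧ ∀ σ ∈ S, IsRatCone σ

/-- A quasifan: a finite set of rational polyhedral cones, closed under taking
faces, in which any two cones intersect in a common face. -/
def IsQuasifan {n : ℕ} (Δ : Set (Set (Fin n → ℝ))) : Prop :=
  IsConeSystem Δ ∧ (∀ σ ∈ Δ, ∀ τ, IsFaceOf τ σ → τ ∈ Δ) ∧
    ∀ σ ∈ Δ, ∀ σ' ∈ Δ, IsFaceOf (σ ∩ σ') σ

/-- A fan: a quasifan all of whose cones are strictly convex. -/
def IsFan {n : ℕ} (Δ : Set (Set (Fin n → ℝ))) : Prop :=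
  IsQuasifan Δ ∧ ∀ σ ∈ Δ, IsStrictlyConvexCone σ

/-- `F` defines a map of systems of cones (in particular of (quasi-)fans):
every cone of `S` is mapped by `F^ℝ` into some cone of `S'`. -/
def IsConeMap {n m : ℕ} (F : (Fin n → ℤ) →ₗ[ℤ] (Fin m → ℤ))
    (S : Set (Set (Fin n → ℝ))) (S' : Set (Set (Fin m → ℝ))) : Prop :=
  ∀ σ ∈ S, ∃ τ ∈ S', extR F '' σ ⊆ τ

/-- A sublattice `L ⊆ ℤ^n` is primitive if the quotient `ℤ^n/L` is
torsion-free. -/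
def IsPrimitive {n : ℕ} (L : Submodule ℤ (Fin n → ℤ)) : Prop :=
  ∀ (v : Fin n → ℤ) (k : ℤ), k ≠ 0 → k • v ∈ L → v ∈ L

/-- The set of maximal cones of a system of cones. -/
def maxCones {n : ℕ} (Δ : Set (Set (Fin n → ℝ))) : Set (Set (Fin n → ℝ)) :=
  {σ ∈ Δ | ∀ τ ∈ Δ, σ ⊆ τ → σ = τ}

/-- `ρ` is a ray (one-dimensional cone) of `Δ`. -/
def IsRay {n : ℕ} (Δ : Set (Set (Fin n → ℝ))) (ρ : Set (Fin n → ℝ)) : Prop :=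
  ρ ∈ Δ ∧ Module.finrank ℝ (Submodule.span ℝ ρ) = 1

/-- `Δt`, together with the surjection `P : ℤ^n → ℤ^m` onto the quotient of
`ℤ^n` by the primitive sublattice `L̂ = ker P ⊇ L`, is the quotient fan of the
system of cones `S` by `L`: the projection `P` defines a map of systems of
cones from `S` to the fan `Δt` and every map of systems of cones `F` from `S`
to a fan with `F(L) = 0` factors through `P` via a map of fans. -/
def IsQuotientFan {n m : ℕ} (S : Set (Set (Fin n → ℝ))) (L : Submodule ℤ (Fin n → ℤ))
    (P : (Fin n → ℤ) →ₗ[ℤ] (Fin m → ℤ)) (Δt : Set (Set (Fin m → ℝ))) : Prop :=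
  Function.Surjective P ∧ L ≤ LinearMap.ker P ∧ IsPrimitive (LinearMap.ker P) ∧
  IsFan Δt ∧ IsConeMap P S Δt ∧
  ∀ (k : ℕ) (F : (Fin n → ℤ) →ₗ[ℤ] (Fin k → ℤ)) (Δ' : Set (Set (Fin k → ℝ))),
    IsFan Δ' → IsConeMap F S Δ' → L ≤ LinearMap.ker F →
    ∃ Ft : (Fin m → ℤ) →ₗ[ℤ] (Fin k → ℤ), IsConeMap Ft Δt Δ' ∧ F = Ft.comp P

/-! Since `V ⊆ σ'` and `σ'` is closed under addition, `σ'` is a union of cosets of `V`, so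
`π⁻¹(π σ') = σ'` and hence `π σ ∩ π σ' = π (σ ∩ σ')`. The face `σ ∩ σ'` is saturated in the
same way, which lets the face condition descend from `σ` to `π σ`. -/

section Quotient

variable {E : Type*} [AddCommGroup E] [Module ℝ E]

lemma isCone_coneHull (s : Set E) : IsCone (coneHull s) :=
  ⟨fun _ h => h.1.1, fun _ hx _ hy σ h => h.1.2.1 _ (hx σ h) _ (hy σ h),
    fun c hc _ hx σ h => h.1.2.2 c hc _ (hx σ h)⟩

lemma IsRatCone.isCone {n : ℕ} {σ : Set (Fin n → ℝ)} (h : IsRatCone σ) : IsCone σ := by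
  obtain ⟨s, rfl⟩ := h
  exact isCone_coneHull _

lemma IsCone.image {F : Type*} [AddCommGroup F] [Module ℝ F] {σ : Set E} (h : IsCone σ)
    (f : E →ₗ[ℝ] F) : IsCone (f '' σ) := by
  refine ⟨⟨0, h.1, map_zero f⟩, ?_, ?_⟩
  · rintro _ ⟨x, hx, rfl⟩ _ ⟨y, hy, rfl⟩
    exact ⟨x + y, h.2.1 x hx y hy, map_add f x y⟩
  · rintro c hc _ ⟨x, hx, rfl⟩
    exact ⟨c • x, h.2.2 c hc x hx, map_smul f c x⟩

lemma IsCone.preimage_image_mkQ_eq {σ : Set E} (h : IsCone σ) {V : Submodule ℝ E}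
    (hV : (V : Set E) ⊆ σ) : V.mkQ ⁻¹' (V.mkQ '' σ) = σ := by
  refine subset_antisymm ?_ (subset_preimage_image _ _)
  rintro x ⟨y, hy, hxy⟩
  have hdiff : x - y ∈ V := by
    rw [← Submodule.ker_mkQ V, LinearMap.mem_ker, map_sub, hxy, sub_self]
  simpa using h.2.1 y hy _ (hV hdiff)

lemma IsFaceOf.image_mkQ {τ σ : Set E} (h : IsFaceOf τ σ) {V : Submodule ℝ E}
    (hV : (V : Set E) ⊆ τ) : IsFaceOf (V.mkQ '' τ) (V.mkQ '' σ) := by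
  refine ⟨h.1.image _, image_mono h.2.1, ?_⟩
  rintro _ ⟨x, hx, rfl⟩ _ ⟨y, hy, rfl⟩ hxy
  rw [← map_add, ← mem_preimage, h.1.preimage_image_mkQ_eq hV] at hxy
  obtain ⟨hxτ, hyτ⟩ := h.2.2 x hx y hy hxy
  exact ⟨mem_image_of_mem _ hxτ, mem_image_of_mem _ hyτ⟩

end Quotient

theorem common_face_in_quotient_general {n : ℕ} (σ σ' : Set (Fin n → ℝ))
    (hσ' : IsRatCone σ')
    (hface : IsFaceOf (σ ∩ σ') σ)
    (V : Submodule ℝ (Fin n → ℝ))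
    (hV : (V : Set (Fin n → ℝ)) = {x | x ∈ σ ∧ -x ∈ σ})
    (hV' : (V : Set (Fin n → ℝ)) = {x | x ∈ σ' ∧ -x ∈ σ'}) :
    (⇑V.mkQ '' σ) ∩ (⇑V.mkQ '' σ') = ⇑V.mkQ '' (σ ∩ σ') ∧
    IsFaceOf ((⇑V.mkQ '' σ) ∩ (⇑V.mkQ '' σ')) (⇑V.mkQ '' σ) := by
  have hVσ : (V : Set (Fin n → ℝ)) ⊆ σ := hV ▸ fun _ hx => hx.1
  have hVσ' : (V : Set (Fin n → ℝ)) ⊆ σ' := hV' ▸ fun _ hx => hx.1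
  have himage : (⇑V.mkQ '' σ) ∩ (⇑V.mkQ '' σ') = ⇑V.mkQ '' (σ ∩ σ') := by
    rw [← image_inter_preimage, hσ'.isCone.preimage_image_mkQ_eq hVσ']
  exact ⟨himage, himage ▸ hface.image_mkQ (subset_inter hVσ hVσ')⟩

/-- Let `σ` and `σ'` be rational polyhedral cones in `N^ℝ`
intersecting in a common face, both having the same smallest face
`V = σ ∩ (−σ) = σ' ∩ (−σ')`, a linear subspace. Let `π : N^ℝ → N^ℝ/V` be the
quotient map. Then `π(σ) ∩ π(σ') = π(σ ∩ σ')` and `π(σ) ∩ π(σ')` is a face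
of `π(σ)`. -/
theorem common_face_in_quotient {n : ℕ} (σ σ' : Set (Fin n → ℝ))
    (hσ : IsRatCone σ) (hσ' : IsRatCone σ')
    (hface : IsFaceOf (σ ∩ σ') σ) (hface' : IsFaceOf (σ ∩ σ') σ')
    (V : Submodule ℝ (Fin n → ℝ))
    (hV : (V : Set (Fin n → ℝ)) = {x | x ∈ σ ∧ -x ∈ σ})
    (hV' : (V : Set (Fin n → ℝ)) = {x | x ∈ σ' ∧ -x ∈ σ'}) :
    (⇑V.mkQ '' σ) ∩ (⇑V.mkQ '' σ') = ⇑V.mkQ '' (σ ∩ σ') ∧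
    IsFaceOf ((⇑V.mkQ '' σ) ∩ (⇑V.mkQ '' σ')) (⇑V.mkQ '' σ) :=
  common_face_in_quotient_general σ σ' hσ' hface V hV hV'
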